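/- For (f,d,u) E' (f',d',u') (so f = f' and d = d'), E-equivalence of (f,d,u) and (f,d,u') is equivalent to the conjunction: u Δ u' ⊆ ran(f ↾ {d'' : d ◁ d''}), |u Δ u'| is even, and u \ ran(f ↾ {d'' : d ◁ d''}) = u' \ ran(f ↾ {d'' : d ◁ d''}). -/

import Mathlib

open scoped symmDiff

/-- `f₁ ≤ f₂` iff there exists `e` with `f₁ = e ∘ f₂`. -/
def FLe {D ι : Type} (f₁ f₂ : D → ι) : Prop := ∃ e : ι → ι, f₁ = e ∘ f₂

/-- The cone `⌊d⌋ = {d' : d ◁ d'}`. -/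
def cone {D : Type} (lt : D → D → Prop) (d : D) : Set D := {d' | lt d d'}

/-- Elements of the structure `H₁`: triples `(f, d, u)` with `f` a function on `D`,
`d ∈ D` and `u` a finite subset of `ι` (which contains `X = ⋃ {ran f : f ∈ F}`). -/
abbrev Tri (D ι : Type) : Type := (D → ι) × D × Finset ι

/-- `ran (f ↾ ⌊d⌋)`. -/
def ranAbove {D ι : Type} (lt : D → D → Prop) (f : D → ι) (d : D) : Set ι :=
  f '' cone lt d

/-- The parity predicate: `P(f,d,u)` iff `|u ∩ ran (f ↾ ⌊d⌋)|` is odd. -/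
def Ppred {D ι : Type} (lt : D → D → Prop) (t : Tri D ι) : Prop :=
  Odd ((↑t.2.2 ∩ ranAbove lt t.1 t.2.1).ncard)

/-- The difference predicate: `D_v(f,d,u)` iff `u \ ran (f ↾ ⌊d⌋) ⊆ v` and
`v ∩ ran (f ↾ ⌊d⌋) = ∅`. -/
def Dpred {D ι : Type} (lt : D → D → Prop) (v : Finset ι) (t : Tri D ι) : Prop :=
  (↑t.2.2 : Set ι) \ ranAbove lt t.1 t.2.1 ⊆ ↑v ∧
    (↑v : Set ι) ∩ ranAbove lt t.1 t.2.1 = ∅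

/-- The equivalence relation `E`: `(f,d,u) E (f',d',u')` iff `(f,d) = (f',d')` and
there are `d₀, …, d_{2n-1} ∈ ⌊d⌋` with `u Δ {f d₀} Δ … Δ {f d_{2n-1}} = u'`. -/
def Erel {D ι : Type} [DecidableEq ι] (lt : D → D → Prop) (a b : Tri D ι) : Prop :=
  a.1 = b.1 ∧ a.2.1 = b.2.1 ∧
    ∃ l : List D, (∀ x ∈ l, lt a.2.1 x) ∧ Even l.length ∧
      b.2.2 = l.foldl (fun w x => w ∆ ({a.1 x} : Finset ι)) a.2.2

/-- The relation `R`: `(f,d,u) R (f',d',u')` iff `f ≤ f'` and, for `e` witnessing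
this, `u = {i : there are an odd number of j ∈ u' with e j = i}`. -/
def Rrel {D ι : Type} (a b : Tri D ι) : Prop :=
  FLe a.1 b.1 ∧ ∀ e : ι → ι, a.1 = e ∘ b.1 →
    (↑a.2.2 : Set ι) = {i | Odd ((↑b.2.2 ∩ e ⁻¹' {i}).ncard)}

/-- The action of the group `G` of finite sets: `F_c (f,d,u) = (f,d,u Δ c)`. -/
def Fc {D ι : Type} [DecidableEq ι] (c : Finset ι) (t : Tri D ι) : Tri D ι :=
  (t.1, t.2.1, t.2.2 ∆ c)

/-! The fold in the definition of `E` is `u ∆ s` with `s = {f d₀} ∆ ⋯ ∆ {f d_{m-1}}`, so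
`u E u'` iff `u ∆ u'` is such an `s` with `m` even. These `s` are exactly the finite subsets of
`ran (f ↾ ⌊d⌋)`, and `|s| ≡ m (mod 2)` because each toggle changes the cardinality by one.
The third condition follows from `u ∆ u' ⊆ ran (f ↾ ⌊d⌋)`. -/

theorem sdiff_eq_sdiff_of_symmDiff_le {α : Type*} [GeneralizedBooleanAlgebra α] {a b c : α}
    (h : a ∆ b ≤ c) : a \ c = b \ c := by
  obtain ⟨hab, hba⟩ := symmDiff_le_iff.1 h
  exact le_antisymm (sdiff_le_iff.2 (by simpa [sup_comm] using hab))
    (sdiff_le_iff.2 (by simpa [sup_comm] using hba))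

theorem Finset.card_symmDiff_add_two_mul_card_inter {α : Type*} [DecidableEq α]
    (s t : Finset α) : (s ∆ t).card + 2 * (s ∩ t).card = s.card + t.card := by
  rw [symmDiff_eq_sup_sdiff_inf, sup_eq_union, inf_eq_inter, ← card_union_add_card_inter,
    card_sdiff_of_subset inter_subset_union]
  have := card_le_card (inter_subset_union (s := s) (t := t))
  omega

theorem Finset.even_card_symmDiff_iff {α : Type*} [DecidableEq α] (s t : Finset α) :
    Even (s ∆ t).card ↔ (Even s.card ↔ Even t.card) := by
  have := card_symmDiff_add_two_mul_card_inter s t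
  simp only [Nat.even_iff]
  omega

theorem List.foldl_symmDiff_eq {α β : Type*} [GeneralizedBooleanAlgebra α] (g : β → α)
    (a : α) (l : List β) :
    l.foldl (fun w x => w ∆ g x) a = a ∆ l.foldl (fun w x => w ∆ g x) ⊥ := by
  induction l generalizing a with
  | nil => simp
  | cons x l ih =>
    rw [foldl_cons, foldl_cons, ih (a ∆ g x), ih (⊥ ∆ g x), bot_symmDiff, symmDiff_assoc]

section SymmDiffSingletons

variable {D ι : Type*} [DecidableEq ι]

def symmDiffSingletons (f : D → ι) (l : List D) : Finset ι :=
  l.foldl (fun w x => w ∆ {f x}) ∅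

theorem foldl_symmDiff_singleton_eq (f : D → ι) (u : Finset ι) (l : List D) :
    l.foldl (fun w x => w ∆ {f x}) u = u ∆ symmDiffSingletons f l :=
  List.foldl_symmDiff_eq _ u l

@[simp]
theorem symmDiffSingletons_nil (f : D → ι) : symmDiffSingletons f [] = ∅ := rfl

theorem symmDiffSingletons_cons (f : D → ι) (x : D) (l : List D) :
    symmDiffSingletons f (x :: l) = {f x} ∆ symmDiffSingletons f l := by
  rw [symmDiffSingletons, List.foldl_cons, foldl_symmDiff_singleton_eq, ← Finset.bot_eq_empty,
    bot_symmDiff]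

theorem even_card_symmDiffSingletons (f : D → ι) (l : List D) :
    Even (symmDiffSingletons f l).card ↔ Even l.length := by
  induction l with
  | nil => simp
  | cons x l ih =>
    rw [symmDiffSingletons_cons, Finset.even_card_symmDiff_iff, ih, List.length_cons,
      Nat.even_add_one, Finset.card_singleton]
    simp

theorem coe_symmDiffSingletons_subset (f : D → ι) (l : List D) :
    (↑(symmDiffSingletons f l) : Set ι) ⊆ f '' {x | x ∈ l} := by
  induction l with
  | nil => simp
  | cons x l ih =>
    rw [symmDiffSingletons_cons, Finset.coe_symmDiff]
    refine symmDiff_le_sup.trans (Set.union_subset ?_ (ih.trans (Set.image_mono ?_)))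
    · simp
    · exact fun y hy => List.mem_cons_of_mem x hy

theorem exists_symmDiffSingletons_eq {f : D → ι} {S : Set D} {s : Finset ι}
    (hs : (↑s : Set ι) ⊆ f '' S) : ∃ l : List D, (∀ x ∈ l, x ∈ S) ∧ symmDiffSingletons f l = s := by
  induction s using Finset.induction_on with
  | empty => exact ⟨[], by simp, rfl⟩
  | insert a s ha ih =>
    rw [Finset.coe_insert, Set.insert_subset_iff] at hs
    obtain ⟨l, hlS, hl⟩ := ih hs.2
    obtain ⟨x, hxS, rfl⟩ := hs.1
    refine ⟨x :: l, ?_, ?_⟩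
    · simpa using ⟨hxS, hlS⟩
    · rw [symmDiffSingletons_cons, hl, (Finset.disjoint_singleton_left.2 ha).symmDiff_eq_sup,
        Finset.insert_eq, Finset.sup_eq_union]

end SymmDiffSingletons

/-- for elements `(f,d,u)` and `(f,d,u')` of the same `E'`-class,
`E`-equivalence is equivalent to: `u Δ u' ⊆ ran (f ↾ ⌊d⌋)`, `|u Δ u'|` is even,
and `u \ ran (f ↾ ⌊d⌋) = u' \ ran (f ↾ ⌊d⌋)`. -/
theorem stmt_7 {D ι : Type} [DecidableEq ι] (lt : D → D → Prop)
    (f : D → ι) (d : D) (u u' : Finset ι) :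
    Erel lt (f, d, u) (f, d, u') ↔
      ((↑(u ∆ u') : Set ι) ⊆ ranAbove lt f d ∧
       Even (u ∆ u').card ∧
       (↑u : Set ι) \ ranAbove lt f d = (↑u' : Set ι) \ ranAbove lt f d) := by
  constructor
  · rintro ⟨-, -, l, hl, hlen, hu'⟩
    dsimp only at hl hu'
    have hF : u ∆ u' = symmDiffSingletons f l := by
      rw [hu', foldl_symmDiff_singleton_eq, symmDiff_symmDiff_cancel_left]
    have hR : (↑(u ∆ u') : Set ι) ⊆ ranAbove lt f d :=
      hF ▸ (coe_symmDiffSingletons_subset f l).trans (Set.image_mono hl)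
    refine ⟨hR, hF ▸ (even_card_symmDiffSingletons f l).2 hlen, ?_⟩
    exact sdiff_eq_sdiff_of_symmDiff_le (by rwa [← Finset.coe_symmDiff])
  · rintro ⟨hR, heven, -⟩
    obtain ⟨l, hl, hF⟩ := exists_symmDiffSingletons_eq hR
    refine ⟨rfl, rfl, l, hl, (even_card_symmDiffSingletons f l).1 (hF ▸ heven), ?_⟩
    rw [foldl_symmDiff_singleton_eq, hF, symmDiff_symmDiff_cancel_left]
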